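/- The optimal values of the two constrained problems are equal: the infimum of w^π_0(s) over all π ∈ Π_MR satisfying w^π_i(s) ≤ b_i for all 1 ≤ i ≤ K equals the infimum of w̄^η_0(s,𝟏) over all η ∈ Π̄ satisfying w̄^η_i(s,𝟏) ≤ b_i for all 1 ≤ i ≤ K. -/
import Mathlib


open Finset

/-- The augmented binary component space `𝒵 = {0,1}^{K+1}`. -/
abbrev ZVec (K : ℕ) := Fin (K + 1) → Fin 2

/-- The all-ones vector `𝟏 ∈ 𝒵`. -/
def oneVec (K : ℕ) : ZVec K := fun _ => 1

/-- `ρ`-factor: `c ^ (z_i * z'_i) * (1 - c) ^ (z_i * (1 - z'_i))` (with `c ^ 0 = 1`). -/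
noncomputable def rho (c : ℝ) (zi zi' : Fin 2) : ℝ :=
  c ^ ((zi : ℕ) * (zi' : ℕ)) * (1 - c) ^ ((zi : ℕ) * (1 - (zi' : ℕ)))

/-- Augmented transition function `Q̄_t((x',z') | (x,z), a)`. -/
noncomputable def Qbar {X A : Type*} (K : ℕ)
    (Q : X → A → X → ℝ) (f : ℕ → Fin (K + 1) → X → A → X → ℝ)
    (t : ℕ) (x : X) (z : ZVec K) (a : A) (x' : X) (z' : ZVec K) : ℝ :=
  if ∃ i, z i = 0 ∧ z' i = 1 then 0
  else Q x a x' * ∏ i, rho (f (t - 1) i x a x') (z i) (z' i)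

/-- Probability of the trajectory `(x_0, a_0, …, x_T)` under the Markov randomized policy
`d = (d_t)_{t<T}` starting at `s`. -/
noncomputable def trajProb {X A : Type*} [DecidableEq X]
    (T : ℕ) (Q : X → A → X → ℝ) (d : Fin T → X → A → ℝ) (s : X)
    (xs : Fin (T + 1) → X) (as : Fin T → A) : ℝ :=
  (if xs 0 = s then 1 else 0) *
    ∏ t : Fin T, d t (xs t.castSucc) (as t) * Q (xs t.castSucc) (as t) (xs t.succ)

/-- Probability of the augmented trajectory `((x_0,z_0), a_0, …, (x_T,z_T))` under the
augmented policy `dbar` starting at `(s, 𝟏)`, with kernels `Q̄_{t+1}` at step `t`. -/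
noncomputable def trajProbBar {X A : Type*} [DecidableEq X]
    (T K : ℕ) (Q : X → A → X → ℝ) (f : ℕ → Fin (K + 1) → X → A → X → ℝ)
    (dbar : Fin T → X × ZVec K → A → ℝ) (s : X)
    (xzs : Fin (T + 1) → X × ZVec K) (as : Fin T → A) : ℝ :=
  (if xzs 0 = (s, oneVec K) then 1 else 0) *
    ∏ t : Fin T, dbar t (xzs t.castSucc) (as t) *
      Qbar K Q f ((t : ℕ) + 1) (xzs t.castSucc).1 (xzs t.castSucc).2 (as t)
        (xzs t.succ).1 (xzs t.succ).2

/-- `P^π_s(X_t = x, A_t = a)`, the marginal of the trajectory measure in the original model. -/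
noncomputable def Pmarg {X A : Type*} [Fintype X] [Fintype A] [DecidableEq X] [DecidableEq A]
    (T : ℕ) (Q : X → A → X → ℝ) (d : Fin T → X → A → ℝ) (s : X)
    (t : Fin T) (x : X) (a : A) : ℝ :=
  ∑ xs : Fin (T + 1) → X, ∑ as : Fin T → A,
    if xs t.castSucc = x ∧ as t = a then trajProb T Q d s xs as else 0

/-- `P^η_{(s,𝟏)}(X_t = x, Z_t = z, A_t = a)`, the marginal (occupation measure for `t < T`)
in the augmented model. -/
noncomputable def PmargBar {X A : Type*} [Fintype X] [Fintype A] [DecidableEq X] [DecidableEq A]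
    (T K : ℕ) (Q : X → A → X → ℝ) (f : ℕ → Fin (K + 1) → X → A → X → ℝ)
    (dbar : Fin T → X × ZVec K → A → ℝ) (s : X)
    (t : Fin T) (xz : X × ZVec K) (a : A) : ℝ :=
  ∑ xzs : Fin (T + 1) → X × ZVec K, ∑ as : Fin T → A,
    if xzs t.castSucc = xz ∧ as t = a then trajProbBar T K Q f dbar s xzs as else 0

/-- `P^η_{(s,𝟏)}(X_T = x, Z_T = z)`, the terminal marginal in the augmented model. -/
noncomputable def PmargBarT {X A : Type*} [Fintype X] [Fintype A] [DecidableEq X] [DecidableEq A]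
    (T K : ℕ) (Q : X → A → X → ℝ) (f : ℕ → Fin (K + 1) → X → A → X → ℝ)
    (dbar : Fin T → X × ZVec K → A → ℝ) (s : X) (xz : X × ZVec K) : ℝ :=
  ∑ xzs : Fin (T + 1) → X × ZVec K, ∑ as : Fin T → A,
    if xzs (Fin.last T) = xz then trajProbBar T K Q f dbar s xzs as else 0

/-- `d` is a Markov randomized policy: each `d_t(·|x)` is a probability distribution on `A`. -/
def IsMR {S A : Type*} [Fintype A] {T : ℕ} (d : Fin T → S → A → ℝ) : Prop :=
  ∀ (t : Fin T) (x : S), (∀ a : A, 0 ≤ d t x a) ∧ ∑ a : A, d t x a = 1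

/-- An augmented policy is indifferent to the augmented component `z`. -/
def Indiff {X A : Type*} {T K : ℕ} (dbar : Fin T → X × ZVec K → A → ℝ) : Prop :=
  ∀ (t : Fin T) (x : X) (z : ZVec K) (a : A), dbar t (x, z) a = dbar t (x, oneVec K) a

/-- The projection `Γ` of an augmented policy to a policy of the original model. -/
def Gamma {X A : Type*} {T K : ℕ} (dbar : Fin T → X × ZVec K → A → ℝ) :
    Fin T → X → A → ℝ := fun t x a => dbar t (x, oneVec K) a

/-- Stage-wise cost `r̄_{t,i}((x,z),a) = Σ_{x'} r_{t,i}(x,a,x') Q(x'|x,a)` of the augmented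
model (it does not depend on `z`). -/
noncomputable def rbar {X A : Type*} [Fintype X] {K : ℕ}
    (Q : X → A → X → ℝ) (r : ℕ → Fin (K + 1) → X → A → X → ℝ)
    (t : ℕ) (i : Fin (K + 1)) (x : X) (a : A) : ℝ :=
  ∑ x' : X, r t i x a x' * Q x a x'

/-- Combined additive-plus-multiplicative cost
`w^π_i(s) = E^π_s[Σ_t r_{t,i}(X_t,A_t,X_{t+1}) + α_i ∏_t f_{t,i}(X_t,A_t,X_{t+1})]`. -/
noncomputable def wcost {X A : Type*} [Fintype X] [Fintype A] [DecidableEq X] {K : ℕ}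
    (T : ℕ) (Q : X → A → X → ℝ)
    (r f : ℕ → Fin (K + 1) → X → A → X → ℝ) (α : Fin (K + 1) → ℝ)
    (d : Fin T → X → A → ℝ) (s : X) (i : Fin (K + 1)) : ℝ :=
  ∑ xs : Fin (T + 1) → X, ∑ as : Fin T → A,
    trajProb T Q d s xs as *
      ((∑ t : Fin T, r t i (xs t.castSucc) (as t) (xs t.succ)) +
        α i * ∏ t : Fin T, f t i (xs t.castSucc) (as t) (xs t.succ))

/-- Total expected cost in the augmented model
`w̄^η_i(s,𝟏) = E^η_{(s,𝟏)}[Σ_t r̄_{t,i}((X_t,Z_t),A_t) + α_i Z_{T,i}]`. -/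
noncomputable def wbarcost {X A : Type*} [Fintype X] [Fintype A] [DecidableEq X]
    (T K : ℕ) (Q : X → A → X → ℝ)
    (f r : ℕ → Fin (K + 1) → X → A → X → ℝ) (α : Fin (K + 1) → ℝ)
    (dbar : Fin T → X × ZVec K → A → ℝ) (s : X) (i : Fin (K + 1)) : ℝ :=
  ∑ xzs : Fin (T + 1) → X × ZVec K, ∑ as : Fin T → A,
    trajProbBar T K Q f dbar s xzs as *
      ((∑ t : Fin T, rbar Q r t i (xzs t.castSucc).1 (as t)) +
        α i * (((xzs (Fin.last T)).2 i : ℕ) : ℝ))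

/-- The BLP linear functional: `Σ_{t<T} Σ_{(x,z),a} r̄_{t,i}((x,z),a) w_t((x,z),a)
+ Σ_{(x,z)} α_i z_i w_T(x,z)`. -/
noncomputable def BLPlin {X A : Type*} [Fintype X] [Fintype A] (T K : ℕ)
    (Q : X → A → X → ℝ) (r : ℕ → Fin (K + 1) → X → A → X → ℝ) (α : Fin (K + 1) → ℝ)
    (i : Fin (K + 1)) (w : Fin T → X × ZVec K → A → ℝ) (wT : X × ZVec K → ℝ) : ℝ :=
  (∑ t : Fin T, ∑ xz : X × ZVec K, ∑ a : A, rbar Q r t i xz.1 a * w t xz a) +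
    ∑ xz : X × ZVec K, α i * (((xz.2 i : ℕ)) : ℝ) * wT xz

/-- The feasible region `𝒬` of the bilinear program. -/
def BLPFeasible {X A : Type*} [Fintype X] [Fintype A] [DecidableEq X] (T K : ℕ) (hT : 1 ≤ T)
    (Q : X → A → X → ℝ) (f r : ℕ → Fin (K + 1) → X → A → X → ℝ)
    (α b : Fin (K + 1) → ℝ) (s : X)
    (w : Fin T → X × ZVec K → A → ℝ) (wT : X × ZVec K → ℝ) : Prop :=
  (∀ (t : Fin T) (xz : X × ZVec K) (a : A), 0 ≤ w t xz a) ∧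
  (∀ xz : X × ZVec K, 0 ≤ wT xz) ∧
  (∀ xz : X × ZVec K,
    ∑ a : A, w ⟨0, hT⟩ xz a = if xz = (s, oneVec K) then 1 else 0) ∧
  (∀ t : Fin T, 1 ≤ (t : ℕ) → ∀ xz : X × ZVec K,
    ∑ a : A, w t xz a =
      ∑ xz' : X × ZVec K, ∑ a : A, Qbar K Q f t xz'.1 xz'.2 a xz.1 xz.2 *
        w ⟨(t : ℕ) - 1, lt_of_le_of_lt (Nat.sub_le _ _) t.isLt⟩ xz' a) ∧
  (∀ xz : X × ZVec K,
    wT xz = ∑ xz' : X × ZVec K, ∑ a : A, Qbar K Q f T xz'.1 xz'.2 a xz.1 xz.2 *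
      w ⟨T - 1, by omega⟩ xz' a) ∧
  (∀ i : Fin (K + 1), 1 ≤ (i : ℕ) → BLPlin T K Q r α i w wT ≤ b i) ∧
  (∀ (t : Fin T) (x : X) (z : ZVec K) (a : A),
    w t (x, z) a * (∑ a' : A, w t (x, oneVec K) a') =
      w t (x, oneVec K) a * (∑ a' : A, w t (x, z) a'))

section Fwd
variable {X A : Type*} [Fintype X] [Fintype A] [DecidableEq X]
set_option linter.unusedSectionVars false

/-- Forward (occupation-measure) recursion for a finite-horizon chain. -/
noncomputable def fwd : ℕ → (X → ℝ) → (ℕ → X → A → X → ℝ) → X → ℝ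
  | 0, μ, _ => μ
  | (n+1), μ, p =>
      fwd n (fun x' => ∑ x : X, ∑ a : A, μ x * p 0 x a x') (fun m => p (m+1))

lemma fwd_congr : ∀ (n : ℕ) (μ : X → ℝ) (p q : ℕ → X → A → X → ℝ),
    (∀ m, m < n → p m = q m) → fwd n μ p = fwd n μ q := by
  intro n
  induction n with
  | zero => intro μ p q _; rfl
  | succ n ih =>
    intro μ p q h
    show fwd n _ _ = fwd n _ _
    rw [h 0 (Nat.succ_pos n)]
    exact ih _ _ _ (fun m hm => h (m+1) (by omega))

lemma fwd_mass : ∀ (n : ℕ) (μ : X → ℝ) (p : ℕ → X → A → X → ℝ),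
    (∀ m, m < n → ∀ x : X, ∑ a : A, ∑ x' : X, p m x a x' = 1) →
    ∑ x : X, fwd n μ p x = ∑ x : X, μ x := by
  intro n
  induction n with
  | zero => intro μ p _; rfl
  | succ n ih =>
    intro μ p h
    show ∑ x : X, fwd n _ _ x = _
    rw [ih _ _ (fun m hm => h (m+1) (by omega))]
    rw [Finset.sum_comm]
    refine Finset.sum_congr rfl fun x _ => ?_
    rw [Finset.sum_comm]
    simp_rw [← Finset.mul_sum]
    rw [h 0 (by omega) x, mul_one]

lemma fwd_split : ∀ (m n : ℕ) (μ : X → ℝ) (p : ℕ → X → A → X → ℝ),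
    fwd (m + n) μ p = fwd n (fwd m μ p) (fun k => p (k + m)) := by
  intro m
  induction m with
  | zero => intro n μ p; simp [fwd]
  | succ m ih =>
    intro n μ p
    have h1 : m + 1 + n = (m + n) + 1 := by omega
    rw [h1]
    show fwd (m+n) _ _ = _
    rw [ih]
    rfl

lemma chainSum : ∀ (n : ℕ) (μ : X → ℝ) (p : ℕ → X → A → X → ℝ) (h : X → ℝ),
    ∑ xs : Fin (n+1) → X, ∑ as : Fin n → A,
      (μ (xs 0) * ∏ t : Fin n, p t (xs t.castSucc) (as t) (xs t.succ)) * h (xs (Fin.last n))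
    = ∑ x : X, fwd n μ p x * h x := by
  intro n
  induction n with
  | zero =>
    intro μ p h
    rw [← Equiv.sum_comp (Equiv.funUnique (Fin 1) X).symm]
    simp [fwd]
  | succ n ih =>
    intro μ p h
    rw [← Equiv.sum_comp (Fin.consEquiv (fun _ : Fin (n+2) => X))]
    rw [Fintype.sum_prod_type]
    simp_rw [← Equiv.sum_comp (Fin.consEquiv (fun _ : Fin (n+1) => A)),
      Fintype.sum_prod_type]
    simp only [Fin.consEquiv_apply, Fin.prod_univ_succ, Fin.cons_zero, Fin.cons_succ,
      ← Fin.succ_castSucc, ← Fin.succ_last, Fin.val_succ, Fin.castSucc_zero, Fin.val_zero]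
    rw [show ∑ x : X, fwd (n+1) μ p x * h x
        = ∑ x : X, fwd n (fun x' => ∑ y : X, ∑ a : A, μ y * p 0 y a x') (fun m => p (m+1)) x * h x
        from rfl, ← ih]
    rw [Finset.sum_comm]
    refine Finset.sum_congr rfl fun ys _ => ?_
    calc ∑ x : X, ∑ b : A, ∑ bs : Fin n → A,
          μ x * (p 0 x b (ys 0) * ∏ t : Fin n, p (↑t + 1) (ys t.castSucc) (bs t) (ys t.succ)) *
            h (ys (Fin.last n))
        = ∑ x : X, ∑ b : A, (μ x * p 0 x b (ys 0)) *
            ∑ bs : Fin n → A, (∏ t : Fin n, p (↑t + 1) (ys t.castSucc) (bs t) (ys t.succ)) *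
              h (ys (Fin.last n)) := by
          refine Finset.sum_congr rfl fun x _ => Finset.sum_congr rfl fun b _ => ?_
          rw [Finset.mul_sum]
          exact Finset.sum_congr rfl fun bs _ => by ring
      _ = (∑ y : X, ∑ a : A, μ y * p 0 y a (ys 0)) *
            ∑ bs : Fin n → A, (∏ t : Fin n, p (↑t + 1) (ys t.castSucc) (bs t) (ys t.succ)) *
              h (ys (Fin.last n)) := by
          rw [Finset.sum_mul]
          exact Finset.sum_congr rfl fun x _ => by rw [Finset.sum_mul]
      _ = ∑ as : Fin n → A,
            ((∑ y : X, ∑ a : A, μ y * p 0 y a (ys 0)) *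
              ∏ t : Fin n, p (↑t + 1) (ys t.castSucc) (as t) (ys t.succ)) *
              h (ys (Fin.last n)) := by
          rw [Finset.mul_sum]
          exact Finset.sum_congr rfl fun bs _ => by ring

end Fwd

section ZKer
variable {K : ℕ}

/-- The `z`-component kernel of `Qbar`. -/
noncomputable def zker (c : Fin (K+1) → ℝ) (z z' : ZVec K) : ℝ :=
  if ∃ i, z i = 0 ∧ z' i = 1 then 0 else ∏ i, rho (c i) (z i) (z' i)

lemma Qbar_eq {X A : Type*} (K : ℕ) (Q : X → A → X → ℝ)
    (f : ℕ → Fin (K + 1) → X → A → X → ℝ)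
    (t : ℕ) (x : X) (z : ZVec K) (a : A) (x' : X) (z' : ZVec K) :
    Qbar K Q f t x z a x' z' = Q x a x' * zker (fun i => f (t-1) i x a x') z z' := by
  rw [Qbar, zker, mul_ite, mul_zero]

lemma fin2_cases (b : Fin 2) : b = 0 ∨ b = 1 := by
  fin_cases b
  · exact Or.inl rfl
  · exact Or.inr rfl

lemma zker_eq_prod (c : Fin (K+1) → ℝ) (z z' : ZVec K) :
    zker c z z' = ∏ i, if z i = 0 ∧ z' i = 1 then (0:ℝ) else rho (c i) (z i) (z' i) := by
  rw [zker]
  split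
  · next h =>
      obtain ⟨i, hi⟩ := h
      exact (Finset.prod_eq_zero (Finset.mem_univ i) (by simp [hi.1, hi.2])).symm
  · next h =>
      push_neg at h
      exact Finset.prod_congr rfl fun i _ => by
        rw [if_neg]; intro hc; exact (h i hc.1) hc.2

lemma zfac_sum (cc : ℝ) (w : Fin 2) :
    ∑ b : Fin 2, (if w = 0 ∧ b = 1 then (0:ℝ) else rho cc w b) = 1 := by
  rcases fin2_cases w with hw | hw <;> subst hw <;>
    simp [Fin.sum_univ_two, rho]

lemma zker_sum1 (c : Fin (K+1) → ℝ) (z : ZVec K) :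
    ∑ z' : ZVec K, zker c z z' = 1 := by
  simp_rw [zker_eq_prod]
  rw [← Fintype.prod_sum (f := fun (i : Fin (K+1)) (b : Fin 2) =>
    if z i = 0 ∧ b = 1 then (0:ℝ) else rho (c i) (z i) b)]
  exact Finset.prod_eq_one fun i _ => zfac_sum (c i) (z i)

lemma zker_sum_mul (c : Fin (K+1) → ℝ) (z : ZVec K) (i : Fin (K+1)) :
    ∑ z' : ZVec K, zker c z z' * ((z' i : ℕ) : ℝ) = c i * ((z i : ℕ) : ℝ) := by
  simp_rw [zker_eq_prod]
  have key : ∀ z' : ZVec K,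
      (∏ j, if z j = 0 ∧ z' j = 1 then (0:ℝ) else rho (c j) (z j) (z' j)) * ((z' i : ℕ) : ℝ)
      = ∏ j, ((if z j = 0 ∧ z' j = 1 then (0:ℝ) else rho (c j) (z j) (z' j)) *
          (if j = i then ((z' j : ℕ) : ℝ) else 1)) := by
    intro z'
    rw [Finset.prod_mul_distrib, Finset.prod_ite_eq' Finset.univ i
      (fun j => ((z' j : ℕ) : ℝ))]
    simp
  simp_rw [key]
  rw [← Fintype.prod_sum (f := fun (j : Fin (K+1)) (b : Fin 2) =>
    (if z j = 0 ∧ b = 1 then (0:ℝ) else rho (c j) (z j) b) *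
      (if j = i then ((b : ℕ) : ℝ) else 1))]
  have hval : ∀ j : Fin (K+1),
      (∑ b : Fin 2, (if z j = 0 ∧ b = 1 then (0:ℝ) else rho (c j) (z j) b) *
        (if j = i then ((b : ℕ) : ℝ) else 1))
      = if j = i then c i * ((z i : ℕ) : ℝ) else 1 := by
    intro j
    by_cases hj : j = i
    · subst hj
      rcases fin2_cases (z j) with hz | hz <;> rw [hz] <;>
        simp [Fin.sum_univ_two, rho]
    · simp only [if_neg hj, mul_one]
      exact zfac_sum (c j) (z j)
  simp_rw [hval]
  rw [Finset.prod_ite_eq' Finset.univ i (fun _ => c i * ((z i : ℕ) : ℝ))]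
  simp

end ZKer


section Mid
variable {X A : Type*} [Fintype X] [Fintype A] [DecidableEq X] [DecidableEq A]
set_option linter.unusedSectionVars false

lemma chainSum' (n : ℕ) (μ : X → ℝ) (p : ℕ → X → A → X → ℝ) :
    ∑ xs : Fin (n+1) → X, ∑ as : Fin n → A,
      μ (xs 0) * ∏ t : Fin n, p t (xs t.castSucc) (as t) (xs t.succ)
    = ∑ x : X, fwd n μ p x := by
  have := chainSum n μ p (fun _ => 1)
  simpa using this

lemma Qbar_sum {K : ℕ} (Q : X → A → X → ℝ) (hQsum : ∀ x a, ∑ x' : X, Q x a x' = 1)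
    (f : ℕ → Fin (K + 1) → X → A → X → ℝ) (t : ℕ) (x : X) (z : ZVec K) (a : A) :
    ∑ xz' : X × ZVec K, Qbar K Q f t x z a xz'.1 xz'.2 = 1 := by
  rw [Fintype.sum_prod_type]
  simp_rw [Qbar_eq, ← Finset.mul_sum, zker_sum1, mul_one]
  exact hQsum x a

lemma fwd_marg {K : ℕ} (φ : ZVec K → ℝ) :
    ∀ (n : ℕ) (μb : X × ZVec K → ℝ) (ν : X → ℝ)
      (pb : ℕ → X × ZVec K → A → X × ZVec K → ℝ) (q : ℕ → X → A → X → ℝ),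
    (∀ x : X, ∑ z : ZVec K, μb (x, z) * φ z = ν x) →
    (∀ m, m < n → ∀ (x : X) (z : ZVec K) (a : A) (x' : X),
       ∑ z' : ZVec K, pb m (x, z) a (x', z') * φ z' = q m x a x' * φ z) →
    ∀ x : X, ∑ z : ZVec K, fwd n μb pb (x, z) * φ z = fwd n ν q x := by
  intro n
  induction n with
  | zero => intro μb ν pb q h0 _ x; exact h0 x
  | succ n ih =>
    intro μb ν pb q h0 hker x
    refine ih _ _ _ _ ?_ (fun m hm => hker (m+1) (by omega)) x
    intro x'
    calc ∑ z' : ZVec K, (∑ xz : X × ZVec K, ∑ a : A, μb xz * pb 0 xz a (x', z')) * φ z'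
        = ∑ xz : X × ZVec K, ∑ a : A, μb xz * ∑ z' : ZVec K, pb 0 xz a (x', z') * φ z' := by
          simp_rw [Finset.sum_mul]
          rw [Finset.sum_comm]
          refine Finset.sum_congr rfl fun xz _ => ?_
          rw [Finset.sum_comm]
          refine Finset.sum_congr rfl fun a _ => ?_
          rw [Finset.mul_sum]
          exact Finset.sum_congr rfl fun z' _ => by ring
      _ = ∑ y : X, ∑ a : A, ν y * q 0 y a x' := by
          rw [Fintype.sum_prod_type]
          refine Finset.sum_congr rfl fun y _ => ?_
          rw [Finset.sum_comm]
          refine Finset.sum_congr rfl fun a _ => ?_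
          rw [← h0 y, Finset.sum_mul]
          refine Finset.sum_congr rfl fun z _ => ?_
          rw [hker 0 (by omega) y z a x']
          ring

lemma fwd_total (n t0 : ℕ) (ht0 : t0 < n) (μ : X → ℝ) (p : ℕ → X → A → X → ℝ)
    (hstoch : ∀ m, t0 < m → m < n → ∀ x : X, ∑ a : A, ∑ x' : X, p m x a x' = 1) :
    ∑ x : X, fwd n μ p x = ∑ x' : X, ∑ x : X, ∑ a : A, fwd t0 μ p x * p t0 x a x' := by
  obtain ⟨k, rfl⟩ : ∃ k, n = (t0+1) + k := ⟨n - (t0+1), by omega⟩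
  rw [fwd_split (t0+1) k μ p]
  rw [fwd_mass k _ _ (fun m hm x => hstoch (m + (t0+1)) (by omega) (by omega) x)]
  have h1 : fwd (t0+1) μ p = fwd 1 (fwd t0 μ p) (fun j => p (j + t0)) := fwd_split t0 1 μ p
  rw [h1]
  show ∑ x : X, (fun x' => ∑ y : X, ∑ a : A, fwd t0 μ p y * p (0 + t0) y a x') x = _
  simp only [Nat.zero_add]

/-- the dite-extension of a `Fin T`-indexed policy -/
noncomputable def ddm {X A : Type*} (T : ℕ) (d : Fin T → X → A → ℝ) : ℕ → X → A → ℝ :=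
  fun m x a => if h : m < T then d ⟨m, h⟩ x a else 0

lemma ddm_fin {T : ℕ} (d : Fin T → X → A → ℝ) (t : Fin T) (x : X) (a : A) :
    ddm T d ↑t x a = d t x a := by
  simp [ddm, t.isLt]

lemma sum_swap3 {I J L : Type*} [Fintype I] [Fintype J] [Fintype L] (F : I → J → L → ℝ) :
    ∑ a : I, ∑ b : J, ∑ c : L, F a b c = ∑ c : L, ∑ a : I, ∑ b : J, F a b c := by
  calc ∑ a : I, ∑ b : J, ∑ c : L, F a b c
      = ∑ a : I, ∑ c : L, ∑ b : J, F a b c :=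
        Finset.sum_congr rfl fun a _ => Finset.sum_comm
    _ = ∑ c : L, ∑ a : I, ∑ b : J, F a b c := Finset.sum_comm

end Mid

section Main
variable {X A : Type*} [Fintype X] [Fintype A] [DecidableEq X] [DecidableEq A]
set_option linter.unusedSectionVars false
set_option maxHeartbeats 1000000

/-- initial distribution concentrated at `s` -/
noncomputable def mu0 (s : X) : X → ℝ := fun x => if x = s then 1 else 0

/-- initial distribution concentrated at `(s, 𝟏)` -/
noncomputable def mub (K : ℕ) (s : X) : X × ZVec K → ℝ :=
  fun xz => if xz = (s, oneVec K) then 1 else 0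

/-- plain step kernel of the original model -/
noncomputable def pPlain (T : ℕ) (Q : X → A → X → ℝ) (d : Fin T → X → A → ℝ) :
    ℕ → X → A → X → ℝ :=
  fun m x a x' => ddm T d m x a * Q x a x'

/-- step kernel with the multiplicative factor inserted -/
noncomputable def pMul (T : ℕ) (Q : X → A → X → ℝ) (d : Fin T → X → A → ℝ)
    (g : ℕ → X → A → X → ℝ) : ℕ → X → A → X → ℝ :=
  fun m x a x' => ddm T d m x a * Q x a x' * g m x a x'

/-- step kernel with a factor inserted at a single time `t0` -/
noncomputable def pIns (T : ℕ) (Q : X → A → X → ℝ) (d : Fin T → X → A → ℝ)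
    (g : ℕ → X → A → X → ℝ) (t0 : ℕ) : ℕ → X → A → X → ℝ :=
  fun m x a x' => ddm T d m x a * Q x a x' * (if m = t0 then g m x a x' else 1)

/-- plain step kernel of the augmented model (under the lifted policy) -/
noncomputable def pbar (T K : ℕ) (Q : X → A → X → ℝ) (f : ℕ → Fin (K + 1) → X → A → X → ℝ)
    (d : Fin T → X → A → ℝ) : ℕ → X × ZVec K → A → X × ZVec K → ℝ :=
  fun m xz a xz' => ddm T d m xz.1 a * Qbar K Q f (m+1) xz.1 xz.2 a xz'.1 xz'.2

/-- augmented step kernel with `r̄` inserted at a single time `t0` -/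
noncomputable def pbarIns (T K : ℕ) (Q : X → A → X → ℝ) (f : ℕ → Fin (K + 1) → X → A → X → ℝ)
    (d : Fin T → X → A → ℝ) (r : ℕ → Fin (K + 1) → X → A → X → ℝ) (i : Fin (K + 1))
    (t0 : ℕ) : ℕ → X × ZVec K → A → X × ZVec K → ℝ :=
  fun m xz a xz' => pbar T K Q f d m xz a xz' * (if m = t0 then rbar Q r m i xz.1 a else 1)

lemma wbar_eq_w (T K : ℕ) (Q : X → A → X → ℝ) (hQsum : ∀ x a, ∑ x' : X, Q x a x' = 1)
    (f r : ℕ → Fin (K + 1) → X → A → X → ℝ) (α : Fin (K + 1) → ℝ)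
    (d : Fin T → X → A → ℝ) (hd : IsMR d) (s : X) (i : Fin (K + 1)) :
    wbarcost T K Q f r α (fun t xz a => d t xz.1 a) s i = wcost T Q r f α d s i := by
  classical
  -- abbreviations
  have hddm : ∀ m, m < T → ∀ x : X, ∑ a : A, ddm T d m x a = 1 := by
    intro m hm x
    have : ∀ a : A, ddm T d m x a = d ⟨m, hm⟩ x a := fun a => by simp [ddm, hm]
    simp_rw [this]
    exact (hd ⟨m, hm⟩ x).2
  -- stochasticity of the plain kernels
  have hp0stoch : ∀ m, m < T → ∀ x : X,
      ∑ a : A, ∑ x' : X, pPlain T Q d m x a x' = 1 := by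
    intro m hm x
    simp only [pPlain]
    simp_rw [← Finset.mul_sum, hQsum, mul_one]
    exact hddm m hm x
  have hpbstoch : ∀ m, m < T → ∀ xz : X × ZVec K,
      ∑ a : A, ∑ xz' : X × ZVec K, pbar T K Q f d m xz a xz' = 1 := by
    intro m hm xz
    simp only [pbar]
    simp_rw [← Finset.mul_sum, Qbar_sum Q hQsum f, mul_one]
    exact hddm m hm xz.1
  -- marginal of the initial distribution
  have hmu : ∀ (φ : ZVec K → ℝ) (x : X),
      ∑ z : ZVec K, mub K s (x, z) * φ z = mu0 s x * φ (oneVec K) := by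
    intro φ x
    simp only [mub, mu0, Prod.mk.injEq]
    by_cases hx : x = s
    · subst hx
      simp only [true_and, if_true, ite_mul, one_mul, zero_mul]
      rw [Finset.sum_ite_eq' Finset.univ (oneVec K) φ]
      simp
    · simp [hx]
  -- z-marginal of the plain augmented kernel  (φ = 1)
  have hker1 : ∀ m, ∀ (x : X) (z : ZVec K) (a : A) (x' : X),
      ∑ z' : ZVec K, pbar T K Q f d m (x, z) a (x', z') = pPlain T Q d m x a x' := by
    intro m x z a x'
    simp only [pbar, pPlain]
    simp_rw [Qbar_eq, ← Finset.mul_sum, zker_sum1, mul_one]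
  -- z-marginal with the weight z'_i  (φ = z_i)
  have hkerM : ∀ m, ∀ (x : X) (z : ZVec K) (a : A) (x' : X),
      ∑ z' : ZVec K, pbar T K Q f d m (x, z) a (x', z') * ((z' i : ℕ) : ℝ)
      = pMul T Q d (fun m => f m i) m x a x' * ((z i : ℕ) : ℝ) := by
    intro m x z a x'
    have hb : ∀ z' : ZVec K, pbar T K Q f d m (x, z) a (x', z') * ((z' i : ℕ) : ℝ)
        = (ddm T d m x a * Q x a x') *
          (zker (fun j => f (m+1-1) j x a x') z z' * ((z' i : ℕ) : ℝ)) := by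
      intro z'
      simp only [pbar, Qbar_eq]
      ring
    simp_rw [hb, ← Finset.mul_sum, zker_sum_mul]
    simp only [pMul, Nat.add_sub_cancel]
    ring
  -- marginal relation for the forward recursions (φ = 1)
  have hmarg1 : ∀ n, ∀ x : X,
      ∑ z : ZVec K, fwd n (mub K s) (pbar T K Q f d) (x, z) = fwd n (mu0 s) (pPlain T Q d) x := by
    intro n x
    have := fwd_marg (fun _ => (1:ℝ)) n (mub K s) (mu0 s) (pbar T K Q f d) (pPlain T Q d)
      (fun x => by simpa using hmu (fun _ => (1:ℝ)) x)
      (fun m _ x z a x' => by simpa using hker1 m x z a x') x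
    simpa using this
  -- marginal relation for the forward recursions (φ = z_i)
  have hmargM : ∀ x : X,
      ∑ z : ZVec K, fwd T (mub K s) (pbar T K Q f d) (x, z) * ((z i : ℕ) : ℝ)
      = fwd T (mu0 s) (pMul T Q d (fun m => f m i)) x := by
    intro x
    refine fwd_marg (fun z => ((z i : ℕ) : ℝ)) T (mub K s) (mu0 s) (pbar T K Q f d)
      (pMul T Q d (fun m => f m i)) (fun x => by simpa [oneVec] using hmu (fun z => ((z i : ℕ) : ℝ)) x)
      (fun m _ x z a x' => hkerM m x z a x') x
  -- ORIGINAL MODEL: trajectory sums as forward recursions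
  have hprodM : ∀ (xs : Fin (T+1) → X) (as : Fin T → A),
      ∏ t : Fin T, pMul T Q d (fun m => f m i) ↑t (xs t.castSucc) (as t) (xs t.succ)
      = (∏ t : Fin T, d t (xs t.castSucc) (as t) * Q (xs t.castSucc) (as t) (xs t.succ)) *
        ∏ t : Fin T, f ↑t i (xs t.castSucc) (as t) (xs t.succ) := by
    intro xs as
    rw [← Finset.prod_mul_distrib]
    exact Finset.prod_congr rfl fun t _ => by simp only [pMul, ddm_fin]
  have hprodI : ∀ (t0 : Fin T) (xs : Fin (T+1) → X) (as : Fin T → A),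
      ∏ t : Fin T, pIns T Q d (fun m x a x' => r m i x a x') ↑t0 ↑t
          (xs t.castSucc) (as t) (xs t.succ)
      = (∏ t : Fin T, d t (xs t.castSucc) (as t) * Q (xs t.castSucc) (as t) (xs t.succ)) *
        r ↑t0 i (xs t0.castSucc) (as t0) (xs t0.succ) := by
    intro t0 xs as
    calc ∏ t : Fin T, pIns T Q d (fun m x a x' => r m i x a x') ↑t0 ↑t
            (xs t.castSucc) (as t) (xs t.succ)
        = ∏ t : Fin T, (d t (xs t.castSucc) (as t) * Q (xs t.castSucc) (as t) (xs t.succ)) *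
            (if t = t0 then r ↑t i (xs t.castSucc) (as t) (xs t.succ) else 1) := by
          refine Finset.prod_congr rfl fun t _ => ?_
          simp only [pIns, ddm_fin, Fin.val_eq_val]
      _ = _ := by
          rw [Finset.prod_mul_distrib,
            Finset.prod_ite_eq' Finset.univ t0
              (fun t => r ↑t i (xs t.castSucc) (as t) (xs t.succ))]
          simp
  have hA : ∀ t0 : Fin T,
      (∑ xs : Fin (T+1) → X, ∑ as : Fin T → A,
        trajProb T Q d s xs as * r ↑t0 i (xs t0.castSucc) (as t0) (xs t0.succ))
      = ∑ x : X, fwd T (mu0 s) (pIns T Q d (fun m x a x' => r m i x a x') ↑t0) x := by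
    intro t0
    rw [← chainSum' T (mu0 s) (pIns T Q d (fun m x a x' => r m i x a x') ↑t0)]
    refine Finset.sum_congr rfl fun xs _ => Finset.sum_congr rfl fun as _ => ?_
    rw [hprodI t0 xs as]
    simp only [trajProb, mu0]
    ring
  have hB :
      (∑ xs : Fin (T+1) → X, ∑ as : Fin T → A,
        trajProb T Q d s xs as * ∏ t : Fin T, f ↑t i (xs t.castSucc) (as t) (xs t.succ))
      = ∑ x : X, fwd T (mu0 s) (pMul T Q d (fun m => f m i)) x := by
    rw [← chainSum' T (mu0 s) (pMul T Q d (fun m => f m i))]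
    refine Finset.sum_congr rfl fun xs _ => Finset.sum_congr rfl fun as _ => ?_
    rw [hprodM xs as]
    simp only [trajProb, mu0]
    ring
  have hW1 : wcost T Q r f α d s i
      = (∑ t0 : Fin T, ∑ x : X,
          fwd T (mu0 s) (pIns T Q d (fun m x a x' => r m i x a x') ↑t0) x)
        + α i * ∑ x : X, fwd T (mu0 s) (pMul T Q d (fun m => f m i)) x := by
    unfold wcost
    calc ∑ xs : Fin (T+1) → X, ∑ as : Fin T → A,
          trajProb T Q d s xs as *
            ((∑ t : Fin T, r ↑t i (xs t.castSucc) (as t) (xs t.succ)) +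
              α i * ∏ t : Fin T, f ↑t i (xs t.castSucc) (as t) (xs t.succ))
        = ∑ xs : Fin (T+1) → X, ∑ as : Fin T → A,
            ((∑ t0 : Fin T,
              trajProb T Q d s xs as * r ↑t0 i (xs t0.castSucc) (as t0) (xs t0.succ)) +
              α i * (trajProb T Q d s xs as *
                ∏ t : Fin T, f ↑t i (xs t.castSucc) (as t) (xs t.succ))) := by
          refine Finset.sum_congr rfl fun xs _ => Finset.sum_congr rfl fun as _ => ?_
          rw [mul_add, Finset.mul_sum]
          congr 1
          ring
      _ = (∑ xs : Fin (T+1) → X, ∑ as : Fin T → A, ∑ t0 : Fin T,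
            trajProb T Q d s xs as * r ↑t0 i (xs t0.castSucc) (as t0) (xs t0.succ))
          + ∑ xs : Fin (T+1) → X, ∑ as : Fin T → A,
              α i * (trajProb T Q d s xs as *
                ∏ t : Fin T, f ↑t i (xs t.castSucc) (as t) (xs t.succ)) := by
          simp only [Finset.sum_add_distrib]
      _ = (∑ t0 : Fin T, ∑ xs : Fin (T+1) → X, ∑ as : Fin T → A,
            trajProb T Q d s xs as * r ↑t0 i (xs t0.castSucc) (as t0) (xs t0.succ))
          + α i * ∑ xs : Fin (T+1) → X, ∑ as : Fin T → A,
              trajProb T Q d s xs as *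
                ∏ t : Fin T, f ↑t i (xs t.castSucc) (as t) (xs t.succ) := by
          congr 1
          · rw [sum_swap3]
          · simp_rw [← Finset.mul_sum]
      _ = _ := by
          rw [hB]
          exact congrArg₂ (· + ·) (Finset.sum_congr rfl fun t0 _ => hA t0) rfl
  -- AUGMENTED MODEL: trajectory sums as forward recursions
  have hprodbar : ∀ (xzs : Fin (T+1) → X × ZVec K) (as : Fin T → A),
      ∏ t : Fin T, pbar T K Q f d ↑t (xzs t.castSucc) (as t) (xzs t.succ)
      = ∏ t : Fin T, d t (xzs t.castSucc).1 (as t) *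
          Qbar K Q f ((t : ℕ) + 1) (xzs t.castSucc).1 (xzs t.castSucc).2 (as t)
            (xzs t.succ).1 (xzs t.succ).2 := by
    intro xzs as
    exact Finset.prod_congr rfl fun t _ => by simp only [pbar, ddm_fin]
  have hprodbarI : ∀ (t0 : Fin T) (xzs : Fin (T+1) → X × ZVec K) (as : Fin T → A),
      ∏ t : Fin T, pbarIns T K Q f d r i ↑t0 ↑t (xzs t.castSucc) (as t) (xzs t.succ)
      = (∏ t : Fin T, pbar T K Q f d ↑t (xzs t.castSucc) (as t) (xzs t.succ)) *
          rbar Q r ↑t0 i (xzs t0.castSucc).1 (as t0) := by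
    intro t0 xzs as
    calc ∏ t : Fin T, pbarIns T K Q f d r i ↑t0 ↑t (xzs t.castSucc) (as t) (xzs t.succ)
        = ∏ t : Fin T, pbar T K Q f d ↑t (xzs t.castSucc) (as t) (xzs t.succ) *
            (if t = t0 then rbar Q r ↑t i (xzs t.castSucc).1 (as t) else 1) := by
          refine Finset.prod_congr rfl fun t _ => ?_
          simp only [pbarIns, Fin.val_eq_val]
      _ = _ := by
          rw [Finset.prod_mul_distrib,
            Finset.prod_ite_eq' Finset.univ t0
              (fun t => rbar Q r ↑t i (xzs t.castSucc).1 (as t))]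
          simp
  have hbA : ∀ t0 : Fin T,
      (∑ xzs : Fin (T+1) → X × ZVec K, ∑ as : Fin T → A,
        trajProbBar T K Q f (fun t xz a => d t xz.1 a) s xzs as *
          rbar Q r ↑t0 i (xzs t0.castSucc).1 (as t0))
      = ∑ xz : X × ZVec K, fwd T (mub K s) (pbarIns T K Q f d r i ↑t0) xz := by
    intro t0
    rw [← chainSum' T (mub K s) (pbarIns T K Q f d r i ↑t0)]
    refine Finset.sum_congr rfl fun xzs _ => Finset.sum_congr rfl fun as _ => ?_
    rw [hprodbarI t0 xzs as, hprodbar xzs as]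
    simp only [trajProbBar, mub]
    ring
  have hbB :
      (∑ xzs : Fin (T+1) → X × ZVec K, ∑ as : Fin T → A,
        trajProbBar T K Q f (fun t xz a => d t xz.1 a) s xzs as *
          (((xzs (Fin.last T)).2 i : ℕ) : ℝ))
      = ∑ xz : X × ZVec K, fwd T (mub K s) (pbar T K Q f d) xz * ((xz.2 i : ℕ) : ℝ) := by
    rw [← chainSum T (mub K s) (pbar T K Q f d) (fun xz => ((xz.2 i : ℕ) : ℝ))]
    refine Finset.sum_congr rfl fun xzs _ => Finset.sum_congr rfl fun as _ => ?_
    rw [hprodbar xzs as]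
    simp only [trajProbBar, mub]
  have hW2 : wbarcost T K Q f r α (fun t xz a => d t xz.1 a) s i
      = (∑ t0 : Fin T, ∑ xz : X × ZVec K, fwd T (mub K s) (pbarIns T K Q f d r i ↑t0) xz)
        + α i * ∑ xz : X × ZVec K,
            fwd T (mub K s) (pbar T K Q f d) xz * ((xz.2 i : ℕ) : ℝ) := by
    unfold wbarcost
    calc ∑ xzs : Fin (T+1) → X × ZVec K, ∑ as : Fin T → A,
          trajProbBar T K Q f (fun t xz a => d t xz.1 a) s xzs as *
            ((∑ t : Fin T, rbar Q r ↑t i (xzs t.castSucc).1 (as t)) +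
              α i * (((xzs (Fin.last T)).2 i : ℕ) : ℝ))
        = ∑ xzs : Fin (T+1) → X × ZVec K, ∑ as : Fin T → A,
            ((∑ t0 : Fin T, trajProbBar T K Q f (fun t xz a => d t xz.1 a) s xzs as *
                rbar Q r ↑t0 i (xzs t0.castSucc).1 (as t0)) +
              α i * (trajProbBar T K Q f (fun t xz a => d t xz.1 a) s xzs as *
                (((xzs (Fin.last T)).2 i : ℕ) : ℝ))) := by
          refine Finset.sum_congr rfl fun xzs _ => Finset.sum_congr rfl fun as _ => ?_
          rw [mul_add, Finset.mul_sum]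
          congr 1
          ring
      _ = (∑ xzs : Fin (T+1) → X × ZVec K, ∑ as : Fin T → A, ∑ t0 : Fin T,
            trajProbBar T K Q f (fun t xz a => d t xz.1 a) s xzs as *
              rbar Q r ↑t0 i (xzs t0.castSucc).1 (as t0))
          + ∑ xzs : Fin (T+1) → X × ZVec K, ∑ as : Fin T → A,
              α i * (trajProbBar T K Q f (fun t xz a => d t xz.1 a) s xzs as *
                (((xzs (Fin.last T)).2 i : ℕ) : ℝ)) := by
          simp only [Finset.sum_add_distrib]
      _ = (∑ t0 : Fin T, ∑ xzs : Fin (T+1) → X × ZVec K, ∑ as : Fin T → A,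
            trajProbBar T K Q f (fun t xz a => d t xz.1 a) s xzs as *
              rbar Q r ↑t0 i (xzs t0.castSucc).1 (as t0))
          + α i * ∑ xzs : Fin (T+1) → X × ZVec K, ∑ as : Fin T → A,
              trajProbBar T K Q f (fun t xz a => d t xz.1 a) s xzs as *
                (((xzs (Fin.last T)).2 i : ℕ) : ℝ) := by
          congr 1
          · rw [sum_swap3]
          · simp_rw [← Finset.mul_sum]
      _ = _ := by
          rw [hbB]
          exact congrArg₂ (· + ·) (Finset.sum_congr rfl fun t0 _ => hbA t0) rfl
  -- equality of the two B-terms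
  have hTermB :
      ∑ xz : X × ZVec K, fwd T (mub K s) (pbar T K Q f d) xz * ((xz.2 i : ℕ) : ℝ)
      = ∑ x : X, fwd T (mu0 s) (pMul T Q d (fun m => f m i)) x := by
    rw [Fintype.sum_prod_type]
    exact Finset.sum_congr rfl fun x _ => hmargM x
  -- equality of the two A-terms
  have hpbsum : ∀ (t0 : Fin T) (xz : X × ZVec K) (a : A),
      ∑ xz' : X × ZVec K, pbar T K Q f d ↑t0 xz a xz' = ddm T d ↑t0 xz.1 a := by
    intro t0 xz a
    simp only [pbar]
    rw [← Finset.mul_sum, Qbar_sum Q hQsum f, mul_one]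
  have hTermA : ∀ t0 : Fin T,
      ∑ xz : X × ZVec K, fwd T (mub K s) (pbarIns T K Q f d r i ↑t0) xz
      = ∑ x : X, fwd T (mu0 s) (pIns T Q d (fun m x a x' => r m i x a x') ↑t0) x := by
    intro t0
    have ht0 : (↑t0 : ℕ) < T := t0.isLt
    have hcb : fwd ↑t0 (mub K s) (pbarIns T K Q f d r i ↑t0)
        = fwd ↑t0 (mub K s) (pbar T K Q f d) :=
      fwd_congr _ _ _ _ (fun m hm => by
        funext xz a xz'
        simp only [pbarIns]
        rw [if_neg (by omega), mul_one])
    have hco : fwd ↑t0 (mu0 s) (pIns T Q d (fun m x a x' => r m i x a x') ↑t0)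
        = fwd ↑t0 (mu0 s) (pPlain T Q d) :=
      fwd_congr _ _ _ _ (fun m hm => by
        funext x a x'
        simp only [pIns, pPlain]
        rw [if_neg (by omega), mul_one])
    rw [fwd_total T ↑t0 ht0 (mub K s) _ (fun m hm1 hm2 xz => by
          have he : pbarIns T K Q f d r i ↑t0 m = pbar T K Q f d m := by
            funext xz a xz'
            simp only [pbarIns]
            rw [if_neg (by omega), mul_one]
          rw [he]
          exact hpbstoch m hm2 xz),
        fwd_total T ↑t0 ht0 (mu0 s) _ (fun m hm1 hm2 x => by
          have he : pIns T Q d (fun m x a x' => r m i x a x') ↑t0 m = pPlain T Q d m := by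
            funext x a x'
            simp only [pIns, pPlain]
            rw [if_neg (by omega), mul_one]
          rw [he]
          exact hp0stoch m hm2 x)]
    rw [hcb, hco]
    calc ∑ xz' : X × ZVec K, ∑ xz : X × ZVec K, ∑ a : A,
          fwd ↑t0 (mub K s) (pbar T K Q f d) xz * pbarIns T K Q f d r i ↑t0 ↑t0 xz a xz'
        = ∑ xz : X × ZVec K, ∑ a : A,
            fwd ↑t0 (mub K s) (pbar T K Q f d) xz *
              (ddm T d ↑t0 xz.1 a * rbar Q r ↑t0 i xz.1 a) := by
          rw [Finset.sum_comm]
          refine Finset.sum_congr rfl fun xz _ => ?_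
          rw [Finset.sum_comm]
          refine Finset.sum_congr rfl fun a _ => ?_
          simp only [pbarIns, if_pos rfl]
          calc ∑ xz' : X × ZVec K,
                fwd ↑t0 (mub K s) (pbar T K Q f d) xz *
                  (pbar T K Q f d ↑t0 xz a xz' * rbar Q r ↑t0 i xz.1 a)
              = fwd ↑t0 (mub K s) (pbar T K Q f d) xz *
                  ((∑ xz' : X × ZVec K, pbar T K Q f d ↑t0 xz a xz') *
                    rbar Q r ↑t0 i xz.1 a) := by
                rw [← Finset.mul_sum, ← Finset.sum_mul]
            _ = _ := by rw [hpbsum t0 xz a]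
      _ = ∑ x : X, ∑ a : A,
            fwd ↑t0 (mu0 s) (pPlain T Q d) x *
              (ddm T d ↑t0 x a * rbar Q r ↑t0 i x a) := by
          rw [Fintype.sum_prod_type]
          refine Finset.sum_congr rfl fun x _ => ?_
          rw [Finset.sum_comm]
          refine Finset.sum_congr rfl fun a _ => ?_
          rw [← hmarg1 ↑t0 x, Finset.sum_mul]
      _ = ∑ x' : X, ∑ x : X, ∑ a : A,
            fwd ↑t0 (mu0 s) (pPlain T Q d) x *
              pIns T Q d (fun m x a x' => r m i x a x') ↑t0 ↑t0 x a x' := by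
          refine Eq.symm ?_
          rw [Finset.sum_comm]
          refine Finset.sum_congr rfl fun x _ => ?_
          rw [Finset.sum_comm]
          refine Finset.sum_congr rfl fun a _ => ?_
          simp only [pIns, if_pos rfl]
          rw [← Finset.mul_sum]
          congr 1
          simp only [rbar, Finset.mul_sum]
          exact Finset.sum_congr rfl fun x' _ => by simp only [if_true]; ring
  -- conclusion
  rw [hW2, hW1, hTermB]
  exact congrArg₂ (· + ·) (Finset.sum_congr rfl fun t0 _ => hTermA t0) rfl




end Main

/-- The optimal values of the original constrained problem (P) and the augmented constrained
problem (P̄) are equal (infima taken in the extended reals; `inf ∅ = +∞`). -/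
theorem optimal_values_eq {X A : Type*} [Fintype X] [Fintype A] [Nonempty X] [Nonempty A]
    [DecidableEq X] [DecidableEq A]
    (T K : ℕ) (hT : 1 ≤ T)
    (Q : X → A → X → ℝ)
    (hQnn : ∀ x a x', 0 ≤ Q x a x') (hQle : ∀ x a x', Q x a x' ≤ 1)
    (hQsum : ∀ x a, ∑ x' : X, Q x a x' = 1)
    (f : ℕ → Fin (K + 1) → X → A → X → ℝ)
    (hf : ∀ t, t ≤ T - 1 → ∀ i x a x', 0 ≤ f t i x a x' ∧ f t i x a x' ≤ 1)
    (r : ℕ → Fin (K + 1) → X → A → X → ℝ) (α b : Fin (K + 1) → ℝ)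
    (s : X) :
    sInf ((fun d : Fin T → X → A → ℝ => ((wcost T Q r f α d s 0 : ℝ) : EReal)) ''
        {d | IsMR d ∧ ∀ i : Fin (K + 1), 1 ≤ (i : ℕ) → wcost T Q r f α d s i ≤ b i}) =
      sInf ((fun dbar : Fin T → X × ZVec K → A → ℝ =>
          ((wbarcost T K Q f r α dbar s 0 : ℝ) : EReal)) ''
        {dbar | IsMR dbar ∧ Indiff dbar ∧
          ∀ i : Fin (K + 1), 1 ≤ (i : ℕ) → wbarcost T K Q f r α dbar s i ≤ b i}) := by
  have hset : ((fun d : Fin T → X → A → ℝ => ((wcost T Q r f α d s 0 : ℝ) : EReal)) ''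
        {d | IsMR d ∧ ∀ i : Fin (K + 1), 1 ≤ (i : ℕ) → wcost T Q r f α d s i ≤ b i})
      = ((fun dbar : Fin T → X × ZVec K → A → ℝ =>
          ((wbarcost T K Q f r α dbar s 0 : ℝ) : EReal)) ''
        {dbar | IsMR dbar ∧ Indiff dbar ∧
          ∀ i : Fin (K + 1), 1 ≤ (i : ℕ) → wbarcost T K Q f r α dbar s i ≤ b i}) := by
    ext v
    constructor
    · rintro ⟨d, ⟨hMR, hcon⟩, rfl⟩
      refine ⟨fun t xz a => d t xz.1 a, ⟨fun t xz => hMR t xz.1, fun t x z a => rfl,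
        fun i hi => ?_⟩, ?_⟩
      · rw [wbar_eq_w T K Q hQsum f r α d hMR s i]
        exact hcon i hi
      · simp only
        rw [wbar_eq_w T K Q hQsum f r α d hMR s 0]
    · rintro ⟨dbar, ⟨hMR, hInd, hcon⟩, rfl⟩
      have hdb : dbar = fun t xz a => dbar t (xz.1, oneVec K) a := by
        funext t xz a
        conv_lhs => rw [← Prod.mk.eta (p := xz)]
        exact hInd t xz.1 xz.2 a
      have hMRd : IsMR (fun t x a => dbar t (x, oneVec K) a) :=
        fun t x => hMR t (x, oneVec K)
      have hlift : (fun (t : Fin T) (xz : X × ZVec K) (a : A) =>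
          (fun t x a => dbar t (x, oneVec K) a) t xz.1 a) = dbar := by
        rw [hdb]
      refine ⟨fun t x a => dbar t (x, oneVec K) a, ⟨hMRd, fun i hi => ?_⟩, ?_⟩
      · calc wcost T Q r f α (fun t x a => dbar t (x, oneVec K) a) s i
            = wbarcost T K Q f r α (fun (t : Fin T) (xz : X × ZVec K) (a : A) =>
                (fun t x a => dbar t (x, oneVec K) a) t xz.1 a) s i :=
              (wbar_eq_w T K Q hQsum f r α _ hMRd s i).symm
          _ = wbarcost T K Q f r α dbar s i := by rw [hlift]
          _ ≤ b i := hcon i hi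
      · simp only
        rw [show wcost T Q r f α (fun t x a => dbar t (x, oneVec K) a) s 0
            = wbarcost T K Q f r α dbar s 0 from by
          rw [← hlift]
          exact (wbar_eq_w T K Q hQsum f r α _ hMRd s 0).symm]
  rw [hset]
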